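/- arXiv:1108.0843 — 2 statements merged into one kernel-verified Lean document; each statement's English description precedes it below -/
import Mathlib

section
/- Let C = ((ℕ × ℕ) → Bool) with the product topology (Bool discrete). For m ∈ ℕ let R_m = {γ ∈ C : for every n there exists s ≥ n with γ(m, s) = true}, and let R = ⋃_m R_m. For γ ∉ R_m, let N(γ, m) = 1 + the least n such that γ(m, s) = false for all s ≥ n; note N(γ, m) ≥ 2. Define the multi-valued function F from C to ℝ by F(γ) = {(m : ℝ) : γ ∈ R_m} ∪ {(m : ℝ) + 1/(N(γ, m) + 1) : γ ∉ R_m}, which is nonempty for every γ. Then for every γ ∈ C, F is continuous at γ if and only if γ ∈ R. -/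
/-- A multi-valued function `F : X → Set Y` between topological spaces is continuous
at `x` if there is `y ∈ F x` such that for every open `V` containing `y` the set of
points whose value meets `V` is a neighborhood of `x`. -/
def MVContinuousAt {X Y : Type*} [TopologicalSpace X] [TopologicalSpace Y]
    (F : X → Set Y) (x : X) : Prop :=
  ∃ y ∈ F x, ∀ V : Set Y, IsOpen V → y ∈ V → {x' | (F x' ∩ V).Nonempty} ∈ nhds x

/-- `Rset m` is the set of `γ` such that `γ (m, s) = true` for infinitely many `s`. -/
def Rset (m : ℕ) : Set ((ℕ × ℕ) → Bool) :=
  {γ | ∀ n : ℕ, ∃ s : ℕ, n ≤ s ∧ γ (m, s) = true}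

/-- For `γ ∉ Rset m`, `Nfun γ m` is one plus the least `n` such that
`γ (m, s) = false` for all `s ≥ n`. -/
noncomputable def Nfun (γ : (ℕ × ℕ) → Bool) (m : ℕ) : ℕ :=
  1 + sInf {n : ℕ | ∀ s, n ≤ s → γ (m, s) = false}

/-- The counterexample multi-valued function. -/
noncomputable def Fmv (γ : (ℕ × ℕ) → Bool) : Set ℝ :=
  {y | ∃ m : ℕ, (γ ∈ Rset m ∧ y = (m : ℝ)) ∨
    (γ ∉ Rset m ∧ y = (m : ℝ) + 1 / ((Nfun γ m : ℝ) + 1))}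

lemma one_le_Nfun (γ : (ℕ × ℕ) → Bool) (m : ℕ) : 1 ≤ Nfun γ m :=
  Nat.le_add_right 1 _

lemma cval_pos (γ : (ℕ × ℕ) → Bool) (m : ℕ) : 0 < 1 / ((Nfun γ m : ℝ) + 1) := by
  positivity

lemma cval_le_half (γ : (ℕ × ℕ) → Bool) (m : ℕ) : 1 / ((Nfun γ m : ℝ) + 1) ≤ 1 / 2 := by
  have h : (2 : ℝ) ≤ (Nfun γ m : ℝ) + 1 := by
    have := one_le_Nfun γ m
    have : (1 : ℝ) ≤ (Nfun γ m : ℝ) := by exact_mod_cast this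
    linarith
  exact one_div_le_one_div_of_le (by norm_num) h

lemma Rset_fiber {γ₁ γ₂ : (ℕ × ℕ) → Bool} {k : ℕ} (h : ∀ s, γ₁ (k, s) = γ₂ (k, s)) :
    γ₁ ∈ Rset k ↔ γ₂ ∈ Rset k := by
  constructor <;> intro hm n <;> obtain ⟨s, hs, hts⟩ := hm n <;> exact ⟨s, hs, by
    first
      | rw [← h s]; exact hts
      | rw [h s]; exact hts⟩

lemma Nfun_ge {γ : (ℕ × ℕ) → Bool} {m S : ℕ} (hR : γ ∉ Rset m) (ht : γ (m, S) = true) :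
    S + 2 ≤ Nfun γ m := by
  set A := {n : ℕ | ∀ s, n ≤ s → γ (m, s) = false} with hA
  have hne : A.Nonempty := by
    simp only [Rset, Set.mem_setOf_eq, not_forall] at hR
    obtain ⟨n, hn⟩ := hR
    push_neg at hn
    exact ⟨n, fun s hs => by simpa using hn s hs⟩
  have hmem := Nat.sInf_mem hne
  have hgt : S < sInf A := by
    by_contra h
    push_neg at h
    have := hmem S h
    rw [this] at ht
    exact Bool.false_ne_true ht
  have : S + 1 ≤ sInf A := hgt
  have heq : Nfun γ m = 1 + sInf A := rfl
  omega

theorem continuity_of_Fmv_iff_mem_R (γ : (ℕ × ℕ) → Bool) :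
    MVContinuousAt Fmv γ ↔ γ ∈ ⋃ m : ℕ, Rset m := by
  constructor
  · -- forward: continuity implies γ ∈ R
    intro hcont
    by_contra hR
    simp only [Set.mem_iUnion, not_exists] at hR
    obtain ⟨y, hyF, hconty⟩ := hcont
    obtain ⟨m, hm⟩ := hyF
    rcases hm with ⟨hmem, _⟩ | ⟨_, rfl⟩
    · exact hR m hmem
    set c : ℝ := 1 / ((Nfun γ m : ℝ) + 1) with hc
    have hcpos : 0 < c := cval_pos γ m
    have hchalf : c ≤ 1 / 2 := cval_le_half γ m
    have hV := hconty (Metric.ball ((m : ℝ) + c) c) Metric.isOpen_ball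
      (Metric.mem_ball_self hcpos)
    -- sequence converging to γ
    set f : ℕ → (ℕ × ℕ) → Bool := fun n p => if p.1 = m ∧ n ≤ p.2 then true else γ p with hf
    have htend : Filter.Tendsto f Filter.atTop (nhds γ) := by
      rw [tendsto_pi_nhds]
      intro p
      refine Filter.Tendsto.congr' ?_ tendsto_const_nhds
      filter_upwards [Filter.eventually_ge_atTop (p.2 + 1)] with n hn
      simp only [hf]
      rw [if_neg]
      rintro ⟨-, hle⟩
      omega
    have hev : ∀ᶠ n in Filter.atTop,
        f n ∈ {x' | (Fmv x' ∩ Metric.ball ((m : ℝ) + c) c).Nonempty} := htend hV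
    obtain ⟨n, hn⟩ := hev.exists
    obtain ⟨z, hzF, hzB⟩ := hn
    have hfRm : f n ∈ Rset m := by
      intro n'
      refine ⟨max n' n, le_max_left _ _, ?_⟩
      simp [hf, le_max_right]
    have hfiber : ∀ k, k ≠ m → ∀ s, f n (k, s) = γ (k, s) := by
      intro k hk s
      simp only [hf]
      rw [if_neg]
      rintro ⟨h1, -⟩
      exact hk h1
    obtain ⟨k, hk⟩ := hzF
    have hdist := hzB
    rw [Metric.mem_ball, Real.dist_eq] at hdist
    rcases hk with ⟨hkR, rfl⟩ | ⟨hkR, rfl⟩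
    · -- z = k, f n ∈ Rset k
      rcases eq_or_ne k m with rfl | hkm
      · rw [abs_sub_comm] at hdist
        rw [add_sub_cancel_left, abs_of_pos hcpos] at hdist
        exact lt_irrefl c hdist
      · have : γ ∈ Rset k := (Rset_fiber (hfiber k hkm)).mp hkR
        exact hR k this
    · -- z = k + c'
      rcases eq_or_ne k m with rfl | hkm
      · exact hkR hfRm
      set c' : ℝ := 1 / ((Nfun (f n) k : ℝ) + 1) with hc'
      have hc'pos : 0 < c' := cval_pos _ _
      have hc'half : c' ≤ 1 / 2 := cval_le_half _ _
      rw [abs_lt] at hdist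
      rcases Nat.lt_or_ge k m with hlt | hge
      · have hkm1 : (k : ℝ) + 1 ≤ (m : ℝ) := by exact_mod_cast hlt
        linarith [hdist.1]
      · have hlt : m < k := lt_of_le_of_ne hge (Ne.symm hkm)
        have hkm1 : (m : ℝ) + 1 ≤ (k : ℝ) := by exact_mod_cast hlt
        linarith [hdist.2]
  · -- backward: γ ∈ Rset m implies continuity
    intro hmem
    rw [Set.mem_iUnion] at hmem
    obtain ⟨m, hm⟩ := hmem
    refine ⟨(m : ℝ), ⟨m, Or.inl ⟨hm, rfl⟩⟩, ?_⟩
    intro V hVopen hmV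
    obtain ⟨ε, hεpos, hball⟩ := Metric.isOpen_iff.mp hVopen _ hmV
    obtain ⟨S, hS⟩ := exists_nat_gt (1 / ε)
    obtain ⟨S', hSS', hS't⟩ := hm S
    have hεS' : 1 / ((S' : ℝ) + 3) < ε := by
      have hcast : (S : ℝ) ≤ (S' : ℝ) := by exact_mod_cast hSS'
      rw [div_lt_iff₀ (by positivity)]
      rw [div_lt_iff₀ hεpos] at hS
      nlinarith
    have hUopen : IsOpen {γ' : (ℕ × ℕ) → Bool | γ' (m, S') = true} := by
      have hcont : Continuous fun γ' : (ℕ × ℕ) → Bool => γ' (m, S') := continuous_apply _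
      exact hcont.isOpen_preimage {b | b = true} (isOpen_discrete _)
    refine Filter.mem_of_superset (hUopen.mem_nhds hS't) ?_
    intro γ' hγ'
    by_cases hR' : γ' ∈ Rset m
    · exact ⟨(m : ℝ), ⟨m, Or.inl ⟨hR', rfl⟩⟩, hball (Metric.mem_ball_self hεpos)⟩
    · refine ⟨(m : ℝ) + 1 / ((Nfun γ' m : ℝ) + 1), ⟨m, Or.inr ⟨hR', rfl⟩⟩, hball ?_⟩
      have hge : S' + 2 ≤ Nfun γ' m := Nfun_ge hR' hγ'
      have hgeR : (S' : ℝ) + 3 ≤ (Nfun γ' m : ℝ) + 1 := by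
        have : (S' : ℝ) + 2 ≤ (Nfun γ' m : ℝ) := by exact_mod_cast hge
        linarith
      have hle : 1 / ((Nfun γ' m : ℝ) + 1) ≤ 1 / ((S' : ℝ) + 3) :=
        one_div_le_one_div_of_le (by positivity) hgeR
      rw [Metric.mem_ball, Real.dist_eq, add_sub_cancel_left]
      rw [abs_of_pos (cval_pos γ' m)]
      linarith
end

section
/- There exists a multi-valued function F from Cantor space C = (ℕ → Bool) to Baire space N = (ℕ → ℕ) (each with the product topology) such that F(x) is a nonempty closed subset of N for every x ∈ C, the graph of F is a Borel (indeed Fσ) subset of C × N, and the set of points of continuity of F is an analytic subset of C which is not Borel. -/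
/-- A set is `Fσ` if it is a countable union of closed sets. -/
def IsFsigma {X : Type*} [TopologicalSpace X] (S : Set X) : Prop :=
  ∃ g : ℕ → Set X, (∀ n, IsClosed (g n)) ∧ S = ⋃ n, g n

open Set Filter Topology PiNat Encodable MeasureTheory Descriptive

theorem isFsigma_iff_isGδ_compl {X : Type*} [TopologicalSpace X] {S : Set X} :
    IsFsigma S ↔ IsGδ Sᶜ := by
  rw [isGδ_iff_eq_iInter_nat]
  constructor
  · rintro ⟨g, hg, rfl⟩
    exact ⟨fun n => (g n)ᶜ, fun n => (hg n).isOpen_compl, compl_iUnion g⟩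
  · rintro ⟨f, hf, hS⟩
    refine ⟨fun n => (f n)ᶜ, fun n => (hf n).isClosed_compl, ?_⟩
    rw [← compl_iInter, ← hS, compl_compl]

theorem isClopen_setOf_of_eventually_iff {X : Type*} [TopologicalSpace X] {P : X → Prop}
    (h : ∀ x, ∀ᶠ y in 𝓝 x, (P y ↔ P x)) : IsClopen {x | P x} := by
  refine ⟨isOpen_compl_iff.1 (isOpen_iff_eventually.2 fun x hx => ?_),
    isOpen_iff_eventually.2 fun x hx => ?_⟩
  · exact (h x).mono fun y hy => mt hy.1 hx
  · exact (h x).mono fun y hy => hy.2 hx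

namespace PiNat

variable {α : Type*} [TopologicalSpace α]

theorem tendsto_of_forall_mem_cylinder {z : ℕ → ℕ → α} {y : ℕ → α}
    (h : ∀ k, z k ∈ cylinder y k) : Tendsto z atTop (𝓝 y) :=
  tendsto_pi_nhds.2 fun i => tendsto_const_nhds.congr'
    (eventually_atTop.2 ⟨i + 1, fun k hk => (h k i (by omega)).symm⟩)

variable [DiscreteTopology α]

theorem cylinder_mem_nhds (x : ℕ → α) (n : ℕ) : cylinder x n ∈ 𝓝 x :=
  (isOpen_cylinder _ x n).mem_nhds (self_mem_cylinder x n)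

theorem exists_cylinder_subset_of_mem_nhds {s : Set (ℕ → α)} {x : ℕ → α} (hs : s ∈ 𝓝 x) :
    ∃ n, cylinder x n ⊆ s := by
  obtain ⟨_, ⟨y, n, rfl⟩, hx, hsub⟩ := (isTopologicalBasis_cylinders _).mem_nhds_iff.1 hs
  exact ⟨n, (mem_cylinder_iff_eq.1 hx).symm ▸ hsub⟩

end PiNat

def initSeg {α : Type*} (x : ℕ → α) (n : ℕ) : List α := (List.range n).map x

section InitSeg
variable {α : Type*}

@[simp] theorem length_initSeg (x : ℕ → α) (n : ℕ) : (initSeg x n).length = n := by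
  simp [initSeg]

@[simp] theorem getElem_initSeg (x : ℕ → α) {n i : ℕ} (h : i < (initSeg x n).length) :
    (initSeg x n)[i] = x i := by
  simp [initSeg]

theorem take_initSeg (x : ℕ → α) {m n : ℕ} (h : m ≤ n) : (initSeg x n).take m = initSeg x m := by
  rw [initSeg, ← List.map_take, List.take_range, Nat.min_eq_left h, initSeg]

theorem initSeg_eq_initSeg_iff {x y : ℕ → α} {n : ℕ} :
    initSeg y n = initSeg x n ↔ y ∈ cylinder x n := by
  refine ⟨fun h i hi => ?_, fun h => List.ext_getElem (by simp) fun i hi _ => ?_⟩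
  · have := List.getElem_of_eq h (by simpa using hi : i < (initSeg y n).length)
    rwa [getElem_initSeg, getElem_initSeg] at this
  · simp only [length_initSeg] at hi; simpa using h i hi

end InitSeg

theorem List.le_encode_of_mem {l : List ℕ} {a : ℕ} (h : a ∈ l) : a ≤ encode l := by
  induction l with
  | nil => simp at h
  | cons b l ih =>
    rw [encode_list_cons, encode_nat]
    rcases List.mem_cons.1 h with rfl | h
    · exact (Nat.left_le_pair _ _).trans (Nat.le_succ _)
    · exact (ih h).trans ((Nat.right_le_pair _ _).trans (Nat.le_succ _))

theorem image_succ_comp_eq (s : Set (ℕ → ℕ)) :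
    (Nat.succ ∘ ·) '' s = {z | ∀ n, z n ≠ 0} ∩ (Nat.pred ∘ ·) ⁻¹' s := by
  ext z
  constructor
  · rintro ⟨y, hy, rfl⟩
    exact ⟨fun n => Nat.succ_ne_zero _, hy⟩
  · rintro ⟨hz, hs⟩
    exact ⟨_, hs, funext fun n => Nat.succ_pred_eq_of_ne_zero (hz n)⟩

theorem IsClosed.image_succ_comp {s : Set (ℕ → ℕ)} (hs : IsClosed s) :
    IsClosed ((Nat.succ ∘ ·) '' s) := by
  rw [image_succ_comp_eq, ofPred_forall]
  exact (isClosed_iInter fun n => (isClosed_discrete {0}ᶜ).preimage (continuous_apply n)).inter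
    (hs.preimage (by fun_prop))

namespace Descriptive.Tree

variable {A : Type*}

def body (T : tree A) : Set (ℕ → A) := {y | ∀ n, initSeg y n ∈ T}

def IsLeaf (T : tree A) (t : List A) : Prop := t ∈ T ∧ ∀ a, t ++ [a] ∉ T

theorem isClosed_body [TopologicalSpace A] [DiscreteTopology A] (T : tree A) :
    IsClosed (body T) := by
  rw [body, ofPred_forall]
  refine isClosed_iInter fun n => (isClopen_setOf_of_eventually_iff fun y => ?_).isClosed
  filter_upwards [cylinder_mem_nhds y n] with y' hy'
  rw [initSeg_eq_initSeg_iff.2 hy']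

theorem exists_mem_body_or_isLeaf (T : tree A) {t₀ : List A} (ht₀ : t₀ ∈ T) :
    (∃ y ∈ body T, initSeg y t₀.length = t₀) ∨ ∃ t, t₀ <+: t ∧ IsLeaf T t := by
  by_contra! h
  have hext : ∀ s : {t // t ∈ T ∧ t₀ <+: t}, ∃ a, s.1 ++ [a] ∈ T := fun s => by
    simpa [IsLeaf, s.2.1] using h.2 s.1 s.2.2
  choose next hnext using hext
  let g (n : ℕ) : {t // t ∈ T ∧ t₀ <+: t} :=
    (fun s => ⟨s.1 ++ [next s], hnext s, s.2.2.trans (List.prefix_append _ _)⟩)^[n]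
      ⟨t₀, ht₀, List.prefix_rfl⟩
  have g_succ (n : ℕ) : (g (n + 1)).1 = (g n).1 ++ [next (g n)] :=
    congrArg Subtype.val (Function.iterate_succ_apply' _ n _)
  have length_g (n : ℕ) : (g n).1.length = t₀.length + n := by
    induction n with
    | zero => rfl
    | succ n ih => rw [g_succ, List.length_append, ih, List.length_singleton, add_assoc]
  have g_mono {m n : ℕ} (hmn : m ≤ n) : (g m).1 <+: (g n).1 := by
    induction n, hmn using Nat.le_induction with
    | base => exact List.prefix_rfl
    | succ n _ ih => exact ih.trans (g_succ n ▸ List.prefix_append _ _)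
  let y (i : ℕ) : A := (g (i + 1)).1[i]'(by rw [length_g]; omega)
  have initSeg_y (n : ℕ) : initSeg y n = (g n).1.take n :=
    List.ext_getElem (by simp [length_g]) fun i hi _ => by
      simp only [length_initSeg] at hi
      rw [getElem_initSeg, List.getElem_take]
      exact (g_mono (by omega : i + 1 ≤ n)).getElem _
  refine h.1 y (fun n => initSeg_y n ▸ mem_of_prefix (List.take_prefix n _) (g n).2.1) ?_
  rw [initSeg_y, ← List.prefix_iff_eq_take.1 (g _).2.2]

def leafPoint (t : List ℕ) (n : ℕ) : ℕ := (t.map Nat.succ).getD n 0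

theorem leafPoint_of_lt {t : List ℕ} {n : ℕ} (h : n < t.length) : leafPoint t n = t[n] + 1 := by
  simp [leafPoint, h]

theorem leafPoint_eq_zero_iff {t : List ℕ} {n : ℕ} : leafPoint t n = 0 ↔ t.length ≤ n := by
  by_cases h : n < t.length
  · simp [leafPoint_of_lt h, h]
  · simp [leafPoint, not_lt.1 h]

theorem eq_of_leafPoint_mem_cylinder {s t : List ℕ}
    (h : leafPoint s ∈ cylinder (leafPoint t) (t.length + 1)) : s = t := by
  have hs : s.length ≤ t.length :=
    leafPoint_eq_zero_iff.1 ((h _ (by omega)).trans (leafPoint_eq_zero_iff.2 le_rfl))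
  have ht : t.length ≤ s.length :=
    leafPoint_eq_zero_iff.1 ((h _ (by omega)).symm.trans (leafPoint_eq_zero_iff.2 le_rfl))
  refine List.ext_getElem (by omega) fun i hi hi' => ?_
  have := h i (by omega)
  rw [leafPoint_of_lt hi, leafPoint_of_lt hi'] at this
  exact Nat.succ.inj this

def branchesAndLeaves (T : tree ℕ) : Set (ℕ → ℕ) :=
  (Nat.succ ∘ ·) '' body T ∪ leafPoint '' {t | IsLeaf T t}

theorem exists_mem_branchesAndLeaves_mem_cylinder (T : tree ℕ) {y : ℕ → ℕ} {n : ℕ}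
    (hy : initSeg y n ∈ T) : ∃ z ∈ branchesAndLeaves T, z ∈ cylinder (Nat.succ ∘ y) n := by
  rcases exists_mem_body_or_isLeaf T hy with ⟨y', hy', hyy'⟩ | ⟨t, hyt, ht⟩
  · rw [length_initSeg, initSeg_eq_initSeg_iff] at hyy'
    exact ⟨_, Or.inl ⟨y', hy', rfl⟩, fun i hi => congrArg Nat.succ (hyy' i hi)⟩
  · refine ⟨_, Or.inr ⟨t, ht, rfl⟩, fun i hi => ?_⟩
    have hit : i < (initSeg y n).length := by simpa using hi
    rw [leafPoint_of_lt (hit.trans_le hyt.length_le), ← hyt.getElem hit, getElem_initSeg]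
    rfl

theorem branchesAndLeaves_nonempty {T : tree ℕ} (hT : [] ∈ T) : (branchesAndLeaves T).Nonempty :=
  let ⟨z, hz, _⟩ := exists_mem_branchesAndLeaves_mem_cylinder T (y := 0) (n := 0) hT
  ⟨z, hz⟩

theorem closure_image_leafPoint_subset (T : tree ℕ) {S : Set (List ℕ)} (hS : S ⊆ T) :
    closure (leafPoint '' S) ⊆ leafPoint '' S ∪ (Nat.succ ∘ ·) '' body T := by
  intro y hy
  have hcyl (m : ℕ) : ∃ t ∈ S, leafPoint t ∈ cylinder y m := by
    obtain ⟨_, hmem, t, ht, rfl⟩ := mem_closure_iff_nhds.1 hy _ (cylinder_mem_nhds y m)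
    exact ⟨t, ht, hmem⟩
  by_cases hzero : ∃ n, y n = 0
  · obtain ⟨n, hn⟩ := hzero
    obtain ⟨t, ht, hty⟩ := hcyl (n + 1)
    have hlen : t.length ≤ n := leafPoint_eq_zero_iff.1 ((hty n (by omega)).trans hn)
    refine Or.inl ⟨t, ht, funext fun k => ?_⟩
    obtain ⟨s, -, hsy⟩ := hcyl (max (n + 1) (k + 1))
    obtain rfl : s = t := eq_of_leafPoint_mem_cylinder fun i hi =>
      (hsy i (by omega)).trans (hty i (by omega)).symm
    exact hsy k (by omega)
  · simp only [not_exists] at hzero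
    rw [image_succ_comp_eq]
    refine Or.inr ⟨hzero, fun n => ?_⟩
    obtain ⟨t, ht, hty⟩ := hcyl n
    have hlen : n ≤ t.length := by
      by_contra hlt
      exact hzero t.length ((hty _ (by omega)).symm.trans (leafPoint_eq_zero_iff.2 le_rfl))
    have : initSeg (Nat.pred ∘ y) n = t.take n :=
      List.ext_getElem (by simpa using hlen) fun i hi _ => by
        simp only [length_initSeg] at hi
        simp [← hty i hi, leafPoint_of_lt (hi.trans_le hlen)]
    exact this ▸ mem_of_prefix (List.take_prefix n t) (hS ht)

theorem isClosed_branchesAndLeaves (T : tree ℕ) : IsClosed (branchesAndLeaves T) := by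
  refine isClosed_of_closure_subset ?_
  rw [branchesAndLeaves, closure_union, (isClosed_body T).image_succ_comp.closure_eq]
  refine union_subset subset_union_left ((closure_image_leafPoint_subset T ?_).trans
    (union_comm _ _).subset)
  exact fun t (ht : IsLeaf T t) => ht.1

end Descriptive.Tree

open Descriptive.Tree

def codedTree (c x : ℕ → Bool) : tree ℕ :=
  ⟨{t | ∀ k < t.length, c (encode (initSeg x (k + 1), t.take (k + 1))) = true},
    fun t a h k hk => by
      simpa [List.take_append_of_le_length (by omega : k + 1 ≤ t.length)]
        using h k (by simp; omega)⟩

theorem mem_codedTree {c x : ℕ → Bool} {t : List ℕ} :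
    t ∈ codedTree c x ↔ ∀ k < t.length, c (encode (initSeg x (k + 1), t.take (k + 1))) = true :=
  Iff.rfl

theorem mem_body_codedTree {c x : ℕ → Bool} {y : ℕ → ℕ} :
    y ∈ body (codedTree c x) ↔ ∀ k, c (encode (initSeg x (k + 1), initSeg y (k + 1))) = true := by
  refine ⟨fun hy k => ?_, fun h n k hk => ?_⟩
  · simpa [take_initSeg] using hy (k + 1) k (by simp)
  · rw [take_initSeg y (by simpa using hk)]
    exact h k

theorem exists_codedTree_of_analyticSet {S : Set (ℕ → Bool)} (hS : AnalyticSet S) :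
    ∃ c : ℕ → Bool, ∀ x, x ∈ S ↔ (body (codedTree c x)).Nonempty := by
  classical
  rw [AnalyticSet] at hS
  rcases hS with rfl | ⟨f, hf, rfl⟩
  · refine ⟨fun _ => false, fun x => ?_⟩
    simp [Set.Nonempty, mem_body_codedTree]
  refine ⟨fun n => decide (∃ z k, n = encode (initSeg (f z) (k + 1), initSeg z (k + 1))),
    fun x => ⟨?_, fun ⟨y, hy⟩ => ?_⟩⟩
  · rintro ⟨z, rfl⟩
    exact ⟨z, mem_body_codedTree.2 fun k => decide_eq_true ⟨z, k, rfl⟩⟩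
  have hz (k : ℕ) : ∃ z ∈ cylinder y (k + 1), f z ∈ cylinder x (k + 1) := by
    obtain ⟨z, k', hk'⟩ := of_decide_eq_true (mem_body_codedTree.1 hy k)
    obtain ⟨hx, hy⟩ := Prod.mk.inj (encode_injective hk')
    obtain rfl : k = k' := by simpa using congrArg List.length hx
    exact ⟨z, initSeg_eq_initSeg_iff.1 hy.symm, initSeg_eq_initSeg_iff.1 hx.symm⟩
  choose z hzy hzx using hz
  refine ⟨y, tendsto_nhds_unique ((hf.tendsto y).comp
    (tendsto_of_forall_mem_cylinder fun k => cylinder_anti y k.le_succ (hzy k)))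
    (tendsto_of_forall_mem_cylinder fun k => cylinder_anti x k.le_succ (hzx k))⟩

def illFoundedCodes : Set (ℕ → Bool) := {x | (body (codedTree x x)).Nonempty}

theorem not_measurableSet_illFoundedCodes :
    ¬ @MeasurableSet _ (borel (ℕ → Bool)) illFoundedCodes := by
  borelize (ℕ → Bool)
  have : SecondCountableTopology Bool := DiscreteTopology.secondCountableTopology_of_countable
  intro h
  obtain ⟨c, hc⟩ := exists_codedTree_of_analyticSet h.compl.analyticSet
  exact not_iff_self (hc c)

theorem eventually_mem_codedTree_self_iff (t : List ℕ) (x : ℕ → Bool) :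
    ∀ᶠ x' in 𝓝 x, (t ∈ codedTree x' x' ↔ t ∈ codedTree x x) := by
  have h : ∀ k ∈ Finset.range t.length, ∀ᶠ x' in 𝓝 x,
      x' (encode (initSeg x' (k + 1), t.take (k + 1))) =
        x (encode (initSeg x (k + 1), t.take (k + 1))) := by
    intro k _
    set i := encode (initSeg x (k + 1), t.take (k + 1))
    filter_upwards [cylinder_mem_nhds x (max (k + 1) (i + 1))] with x' hx'
    rw [initSeg_eq_initSeg_iff.2 (cylinder_anti x (le_max_left _ _) hx')]
    exact hx' i (by omega)
  filter_upwards [(Finset.range t.length).eventually_all.2 h] with x' hx'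
  exact forall₂_congr fun k hk => by rw [hx' k (Finset.mem_range.2 hk)]

theorem isClopen_setOf_mem_codedTree_self (t : List ℕ) :
    IsClopen {x : ℕ → Bool | t ∈ codedTree x x} :=
  isClopen_setOf_of_eventually_iff (eventually_mem_codedTree_self_iff t)

theorem isClosed_setOf_isLeaf_codedTree_self (t : List ℕ) :
    IsClosed {x : ℕ → Bool | IsLeaf (codedTree x x) t} := by
  simp only [IsLeaf, ofPred_and, ofPred_forall]
  exact (isClopen_setOf_mem_codedTree_self t).isClosed.inter
    (isClosed_iInter fun a => (isClopen_setOf_mem_codedTree_self (t ++ [a])).compl.isClosed)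

theorem isClosed_setOf_mem_body_codedTree_self :
    IsClosed {p : (ℕ → Bool) × (ℕ → ℕ) | p.2 ∈ body (codedTree p.1 p.1)} := by
  show IsClosed {p : (ℕ → Bool) × (ℕ → ℕ) | ∀ n, initSeg p.2 n ∈ codedTree p.1 p.1}
  rw [ofPred_forall]
  refine isClosed_iInter fun n => (isClopen_setOf_of_eventually_iff fun p => ?_).isClosed
  filter_upwards [(continuousAt_snd (p := p)).preimage_mem_nhds (cylinder_mem_nhds p.2 n),
    (continuousAt_fst (p := p)).eventually (eventually_mem_codedTree_self_iff (initSeg p.2 n) p.1)]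
    with q hq₂ hq₁
  rw [initSeg_eq_initSeg_iff.2 hq₂]
  exact hq₁

theorem analyticSet_illFoundedCodes : AnalyticSet illFoundedCodes := by
  have : SecondCountableTopology Bool := DiscreteTopology.secondCountableTopology_of_countable
  have : illFoundedCodes = Prod.fst '' {p | p.2 ∈ body (codedTree p.1 p.1)} := by
    ext x
    simp [illFoundedCodes, Set.Nonempty]
  rw [this]
  exact isClosed_setOf_mem_body_codedTree_self.analyticSet.image_of_continuous continuous_fst

theorem exists_mem_cylinder_append_mem_codedTree_self {x : ℕ → Bool} {t : List ℕ}
    (ht : t ∈ codedTree x x) (N : ℕ) : ∃ x' ∈ cylinder x N, ∃ a, t ++ [a] ∈ codedTree x' x' := by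
  -- Setting every coordinate from `M` on to `true` accepts all codes `≥ M`; the code of the new
  -- node `t ++ [M]` is one of them.
  set M := max N (t.length + 1)
  refine ⟨fun i => if i < M then x i else true, fun i hi => if_pos (by omega), M, fun k hk => ?_⟩
  simp only [List.length_append, List.length_singleton] at hk
  rw [initSeg_eq_initSeg_iff.2 fun i hi => if_pos (by omega)]
  dsimp only
  rcases (Nat.lt_succ_iff.1 hk).lt_or_eq with hk | rfl
  · rw [List.take_append_of_le_length (by omega)]
    split_ifs
    · exact ht k hk
    · rfl
  · have : M ≤ encode (initSeg x (t.length + 1), t ++ [M]) :=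
      (List.le_encode_of_mem (l := t ++ [M]) (by simp)).trans
        (by rw [encode_prod_val]; exact Nat.right_le_pair _ _)
    rw [List.take_of_length_le (by simp), if_neg (by omega)]

theorem isFsigma_graph_branchesAndLeaves_codedTree_self :
    IsFsigma {p : (ℕ → Bool) × (ℕ → ℕ) | p.2 ∈ branchesAndLeaves (codedTree p.1 p.1)} := by
  have hgraph : {p : (ℕ → Bool) × (ℕ → ℕ) | p.2 ∈ branchesAndLeaves (codedTree p.1 p.1)} =
      {p | p.2 ∈ (Nat.succ ∘ ·) '' body (codedTree p.1 p.1)} ∪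
        ⋃ t, {x | IsLeaf (codedTree x x) t} ×ˢ {leafPoint t} := by
    ext p
    simp [branchesAndLeaves, eq_comm]
  have hbranch : IsClosed {p : (ℕ → Bool) × (ℕ → ℕ) |
      p.2 ∈ (Nat.succ ∘ ·) '' body (codedTree p.1 p.1)} := by
    have : {p : (ℕ → Bool) × (ℕ → ℕ) | p.2 ∈ (Nat.succ ∘ ·) '' body (codedTree p.1 p.1)} =
        (⋂ n, {p | p.2 n ∈ ({0}ᶜ : Set ℕ)}) ∩ (fun p => (p.1, Nat.pred ∘ p.2)) ⁻¹'
          {p | p.2 ∈ body (codedTree p.1 p.1)} := by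
      ext p
      simp [image_succ_comp_eq]
    rw [this]
    exact (isClosed_iInter fun n => (isClosed_discrete _).preimage (by fun_prop)).inter
      (isClosed_setOf_mem_body_codedTree_self.preimage (by fun_prop))
  rw [isFsigma_iff_isGδ_compl, hgraph, compl_union, compl_iUnion]
  exact hbranch.isOpen_compl.isGδ.inter (IsGδ.iInter fun t =>
    ((isClosed_setOf_isLeaf_codedTree_self t).prod isClosed_singleton).isOpen_compl.isGδ)

theorem mvContinuousAt_of_mem_illFoundedCodes {x : ℕ → Bool} (hx : x ∈ illFoundedCodes) :
    MVContinuousAt (fun x => branchesAndLeaves (codedTree x x)) x := by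
  obtain ⟨y, hy⟩ := hx
  refine ⟨Nat.succ ∘ y, Or.inl ⟨y, hy, rfl⟩, fun V hV hyV => ?_⟩
  obtain ⟨m, hm⟩ := exists_cylinder_subset_of_mem_nhds (hV.mem_nhds hyV)
  filter_upwards [eventually_mem_codedTree_self_iff (initSeg y m) x] with x' hx'
  obtain ⟨z, hz, hzy⟩ := exists_mem_branchesAndLeaves_mem_cylinder _ (hx'.2 (hy m))
  exact ⟨z, hz, hm hzy⟩

theorem mem_illFoundedCodes_of_mvContinuousAt {x : ℕ → Bool}
    (h : MVContinuousAt (fun x => branchesAndLeaves (codedTree x x)) x) : x ∈ illFoundedCodes := by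
  obtain ⟨w, ⟨y, hy, rfl⟩ | ⟨t, ht, rfl⟩, hw⟩ := h
  · exact ⟨y, hy⟩
  exfalso
  obtain ⟨N, hN⟩ := exists_cylinder_subset_of_mem_nhds
    (hw _ (isOpen_cylinder _ _ (t.length + 1)) (self_mem_cylinder _ _))
  obtain ⟨x', hx', a, hta⟩ := exists_mem_cylinder_append_mem_codedTree_self ht.1 N
  obtain ⟨z, ⟨y, -, rfl⟩ | ⟨s, hs, rfl⟩, hz⟩ := hN hx'
  · exact Nat.succ_ne_zero _ ((hz t.length (by omega)).trans (leafPoint_eq_zero_iff.2 le_rfl))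
  · obtain rfl := eq_of_leafPoint_mem_cylinder hz
    exact hs.2 a hta

theorem setOf_mvContinuousAt_branchesAndLeaves_codedTree_self :
    {x | MVContinuousAt (fun x => branchesAndLeaves (codedTree x x)) x} = illFoundedCodes :=
  Set.ext fun _ => ⟨mem_illFoundedCodes_of_mvContinuousAt, mvContinuousAt_of_mem_illFoundedCodes⟩

theorem exists_multivalued_function_continuity_set_analytic_not_Borel :
    ∃ F : (ℕ → Bool) → Set (ℕ → ℕ),
      (∀ x, (F x).Nonempty) ∧ (∀ x, IsClosed (F x)) ∧
      IsFsigma {p : (ℕ → Bool) × (ℕ → ℕ) | p.2 ∈ F p.1} ∧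
      MeasureTheory.AnalyticSet {x : ℕ → Bool | MVContinuousAt F x} ∧
      ¬ @MeasurableSet _ (borel (ℕ → Bool)) {x : ℕ → Bool | MVContinuousAt F x} := by
  refine ⟨fun x => branchesAndLeaves (codedTree x x), fun x => ?_,
    fun x => isClosed_branchesAndLeaves _, isFsigma_graph_branchesAndLeaves_codedTree_self, ?_, ?_⟩
  · exact branchesAndLeaves_nonempty (by simp [mem_codedTree])
  · rw [setOf_mvContinuousAt_branchesAndLeaves_codedTree_self]
    exact analyticSet_illFoundedCodes
  · rw [setOf_mvContinuousAt_branchesAndLeaves_codedTree_self]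
    exact not_measurableSet_illFoundedCodes
end
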